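/- arXiv:2304.02745 — 3 statements merged into one kernel-verified Lean document; each statement's English description precedes it below -/
import Mathlib

section
/- Within a fixed sector determined by four edges, the Hilbert bisector of two sites satisfies a quadratic algebraic equation: the set of points p = (x,y) with H_Ω(s,p) = H_Ω(t,p), where the chord through s and p meets ∂Ω in fixed edges E_A (behind s) and E_B (beyond p), and the chord through t and p meets ∂Ω in fixed edges E_C (behind t) and E_D (beyond p), satisfies A x² + B xy + C y² + D x + E y + F = 0, where with edge lines a₁x+a₂y+a₃=0, b₁x+b₂y+b₃=0, c₁x+c₂y+c₃=0, d₁x+d₂y+d₃=0 and k = ((b₁s_x+b₂s_y+b₃)(c₁t_x+c₂t_y+c₃))/((d₁t_x+d₂t_y+d₃)(a₁s_x+a₂s_y+a₃)), the coefficients are A = b₁c₁−a₁d₁k, B = b₂c₁+b₁c₂−a₁d₂k−a₂d₁k, C = b₂c₂−a₂d₂k, D = b₃c₁+c₃b₁−a₃d₁k−a₁d₃k, E = b₃c₂+b₂c₃−a₂d₃k−a₃d₂k, F = b₃c₃−a₃d₃k. -/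
/-!
Along a chord `x, s, p, y` (in this order) and an affine function `f` vanishing at `x`, the
distances to `x` are proportional to the values of `f`: `‖s - x‖ / ‖p - x‖ = f s / f p`. Hence,
when the chord through `s` and `p` leaves `Ω` through edges `E_A` and `E_B`, the cross-ratio
defining `H_Ω(s, p)` equals `(B(s) A(p)) / (B(p) A(s))`, where `A`, `B` are the edge-line
equations; similarly `H_Ω(t, p)` is governed by `(D(t) C(p)) / (D(p) C(t))`. Equating the two
cross-ratios and clearing denominators gives `B(p) C(p) = k A(p) D(p)`, which is the stated
quadratic in the coordinates of `p`.
-/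

/-- Evaluation of the line `e₁ x + e₂ y + e₃ = 0` at the point `p`. -/
def lev (e1 e2 e3 : ℝ) (p : ℝ × ℝ) : ℝ := e1 * p.1 + e2 * p.2 + e3

open Real

def levAffine (e1 e2 e3 : ℝ) : ℝ × ℝ →ᵃ[ℝ] ℝ where
  toFun := lev e1 e2 e3
  linear := e1 • LinearMap.fst ℝ ℝ ℝ + e2 • LinearMap.snd ℝ ℝ ℝ
  map_vadd' p v := by
    simp only [lev, vadd_eq_add, Prod.fst_add, Prod.snd_add, LinearMap.add_apply,
      LinearMap.smul_apply, LinearMap.fst_apply, LinearMap.snd_apply, smul_eq_mul]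
    ring

@[simp]
lemma levAffine_apply (e1 e2 e3 : ℝ) (p : ℝ × ℝ) : levAffine e1 e2 e3 p = lev e1 e2 e3 p := rfl

section Chord

variable {E : Type*} [NormedAddCommGroup E]

/-- The cross-ratio of four points `x, s, t, y` on a chord, as it appears in the Hilbert
distance `H(s, t) = ½ log (hilbertCrossRatio x s t y)`. -/
noncomputable def hilbertCrossRatio (x s t y : E) : ℝ :=
  ‖s - y‖ * ‖t - x‖ / (‖t - y‖ * ‖s - x‖)

lemma hilbertCrossRatio_pos {x s t y : E} (hsx : s ≠ x) (hsy : s ≠ y) (htx : t ≠ x)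
    (hty : t ≠ y) : 0 < hilbertCrossRatio x s t y := by
  unfold hilbertCrossRatio
  have := norm_pos_iff.2 (sub_ne_zero.2 hsx); have := norm_pos_iff.2 (sub_ne_zero.2 hsy)
  have := norm_pos_iff.2 (sub_ne_zero.2 htx); have := norm_pos_iff.2 (sub_ne_zero.2 hty)
  positivity

lemma hilbertCrossRatio_self {x s y : E} (hsx : s ≠ x) (hsy : s ≠ y) :
    hilbertCrossRatio x s s y = 1 := by
  unfold hilbertCrossRatio
  rw [mul_comm ‖s - y‖, div_self (by simp [sub_eq_zero, hsx, hsy])]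

variable [NormedSpace ℝ E]

lemma AffineMap.apply_mul_norm_sub_of_mem_segment (f : E →ᵃ[ℝ] ℝ) {x z w : E} (hx : f x = 0)
    (hz : z ∈ segment ℝ x w) : f z * ‖w - x‖ = f w * ‖z - x‖ := by
  rw [segment_eq_image_lineMap] at hz
  obtain ⟨δ, ⟨hδ0, -⟩, rfl⟩ := hz
  have hval : f (lineMap x w δ) = δ * f w := by
    rw [AffineMap.apply_lineMap, hx, AffineMap.lineMap_apply_module', sub_zero, add_zero,
      smul_eq_mul]
  have hdist : ‖lineMap x w δ - x‖ = δ * ‖w - x‖ := by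
    rw [← vsub_eq_sub, AffineMap.lineMap_vsub_left, vsub_eq_sub, norm_smul,
      Real.norm_of_nonneg hδ0]
  rw [hval, hdist]
  ring

lemma hilbertCrossRatio_mul_eq (f g : E →ᵃ[ℝ] ℝ) {x s p y : E} (hfx : f x = 0) (hgy : g y = 0)
    (hsx : s ≠ x) (hpy : p ≠ y) (hs : s ∈ segment ℝ x p) (hp : p ∈ segment ℝ s y) :
    hilbertCrossRatio x s p y * (g p * f s) = g s * f p := by
  have hf := f.apply_mul_norm_sub_of_mem_segment hfx hs
  have hg := g.apply_mul_norm_sub_of_mem_segment hgy (segment_symm ℝ s y ▸ hp)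
  have hden : ‖p - y‖ * ‖s - x‖ ≠ 0 := by simp [sub_eq_zero, hsx, hpy]
  unfold hilbertCrossRatio
  rw [div_mul_eq_mul_div, div_eq_iff hden]
  linear_combination g p * ‖s - y‖ * hf + f p * ‖s - x‖ * hg

lemma hilbert_eq_half_log_crossRatio {Ω : Set E} {H : E → E → ℝ} (hH0 : ∀ p, H p p = 0)
    (hHdef : ∀ s t x y : E, s ∈ interior Ω → t ∈ interior Ω → s ≠ t →
      x ∈ frontier Ω → y ∈ frontier Ω → s ∈ segment ℝ x t → t ∈ segment ℝ s y →
      H s t = 1 / 2 * log (hilbertCrossRatio x s t y))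
    {s p x y : E} (hs : s ∈ interior Ω) (hp : p ∈ interior Ω) (hx : x ∈ frontier Ω)
    (hy : y ∈ frontier Ω) (hsx : s ∈ segment ℝ x p) (hpy : p ∈ segment ℝ s y) :
    H s p = 1 / 2 * log (hilbertCrossRatio x s p y) := by
  by_cases hsp : s = p
  · subst hsp
    rw [hH0, hilbertCrossRatio_self (disjoint_interior_frontier.ne_of_mem hs hx)
      (disjoint_interior_frontier.ne_of_mem hs hy), log_one, mul_zero]
  · exact hHdef s p x y hs hp hsp hx hy hsx hpy

lemma hilbertCrossRatio_eq_of_hilbert_eq {Ω : Set E} {H : E → E → ℝ} (hH0 : ∀ p, H p p = 0)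
    (hHdef : ∀ s t x y : E, s ∈ interior Ω → t ∈ interior Ω → s ≠ t →
      x ∈ frontier Ω → y ∈ frontier Ω → s ∈ segment ℝ x t → t ∈ segment ℝ s y →
      H s t = 1 / 2 * log (hilbertCrossRatio x s t y))
    {s t p x y x' y' : E} (hs : s ∈ interior Ω) (ht : t ∈ interior Ω) (hp : p ∈ interior Ω)
    (hx : x ∈ frontier Ω) (hy : y ∈ frontier Ω) (hx' : x' ∈ frontier Ω) (hy' : y' ∈ frontier Ω)
    (hsx : s ∈ segment ℝ x p) (hpy : p ∈ segment ℝ s y)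
    (htx' : t ∈ segment ℝ x' p) (hpy' : p ∈ segment ℝ t y') (hbis : H s p = H t p) :
    hilbertCrossRatio x s p y = hilbertCrossRatio x' t p y' := by
  have hne {q r} (hq : q ∈ interior Ω) (hr : r ∈ frontier Ω) : q ≠ r :=
    disjoint_interior_frontier.ne_of_mem hq hr
  rw [hilbert_eq_half_log_crossRatio hH0 hHdef hs hp hx hy hsx hpy,
    hilbert_eq_half_log_crossRatio hH0 hHdef ht hp hx' hy' htx' hpy'] at hbis
  exact log_injOn_pos (hilbertCrossRatio_pos (hne hs hx) (hne hs hy) (hne hp hx) (hne hp hy))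
    (hilbertCrossRatio_pos (hne ht hx') (hne ht hy') (hne hp hx') (hne hp hy')) (by linarith)

end Chord

theorem bisector_quadratic_in_sector_general
    (Ω : Set (ℝ × ℝ))
    (H : ℝ × ℝ → ℝ × ℝ → ℝ)
    (hH0 : ∀ p, H p p = 0)
    (hHdef : ∀ s t x y : ℝ × ℝ,
      s ∈ interior Ω → t ∈ interior Ω → s ≠ t →
      x ∈ frontier Ω → y ∈ frontier Ω →
      s ∈ segment ℝ x t → t ∈ segment ℝ s y →
      H s t = (1 / 2) * Real.log ((‖s - y‖ * ‖t - x‖) / (‖t - y‖ * ‖s - x‖)))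
    (a1 a2 a3 b1 b2 b3 c1 c2 c3 d1 d2 d3 : ℝ)
    (s t p : ℝ × ℝ)
    (hs : s ∈ interior Ω) (ht : t ∈ interior Ω) (hp : p ∈ interior Ω)
    -- the chord through `s` and `p` meets `∂Ω` on edge `E_A` (behind `s`) and
    -- edge `E_B` (beyond `p`), in the order `⟨x_A, s, p, x_B⟩`
    (hchord_sp : ∃ xA xB : ℝ × ℝ, xA ∈ frontier Ω ∧ lev a1 a2 a3 xA = 0 ∧
      xB ∈ frontier Ω ∧ lev b1 b2 b3 xB = 0 ∧
      s ∈ segment ℝ xA p ∧ p ∈ segment ℝ s xB)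
    -- the chord through `t` and `p` meets `∂Ω` on edge `E_C` (behind `t`) and
    -- edge `E_D` (beyond `p`), in the order `⟨x_C, t, p, x_D⟩`
    (hchord_tp : ∃ xC xD : ℝ × ℝ, xC ∈ frontier Ω ∧ lev c1 c2 c3 xC = 0 ∧
      xD ∈ frontier Ω ∧ lev d1 d2 d3 xD = 0 ∧
      t ∈ segment ℝ xC p ∧ p ∈ segment ℝ t xD)
    -- all points involved lie strictly on the same side of each edge line
    (hsideA : 0 < lev a1 a2 a3 s * lev a1 a2 a3 p ∧ 0 < lev a1 a2 a3 s * lev a1 a2 a3 t)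
    (hsideD : 0 < lev d1 d2 d3 s * lev d1 d2 d3 p ∧ 0 < lev d1 d2 d3 s * lev d1 d2 d3 t)
    -- `p` is on the Hilbert bisector of `s` and `t`
    (hbis : H s p = H t p) :
    ∀ k : ℝ, k = (lev b1 b2 b3 s * lev c1 c2 c3 t) / (lev d1 d2 d3 t * lev a1 a2 a3 s) →
      (b1 * c1 - a1 * d1 * k) * p.1 ^ 2
        + (b2 * c1 + b1 * c2 - a1 * d2 * k - a2 * d1 * k) * p.1 * p.2
        + (b2 * c2 - a2 * d2 * k) * p.2 ^ 2
        + (b3 * c1 + c3 * b1 - a3 * d1 * k - a1 * d3 * k) * p.1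
        + (b3 * c2 + b2 * c3 - a2 * d3 * k - a3 * d2 * k) * p.2
        + (b3 * c3 - a3 * d3 * k) = 0 := by
  intro k hk
  obtain ⟨xA, xB, hxA, hA, hxB, hB, hsA, hpB⟩ := hchord_sp
  obtain ⟨xC, xD, hxC, hC, hxD, hD, htC, hpD⟩ := hchord_tp
  simp only [← levAffine_apply] at hA hB hC hD hk hsideA hsideD
  set A := levAffine a1 a2 a3
  set B := levAffine b1 b2 b3
  set C := levAffine c1 c2 c3
  set D := levAffine d1 d2 d3
  have hne {q r} (hq : q ∈ interior Ω) (hr : r ∈ frontier Ω) : q ≠ r :=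
    disjoint_interior_frontier.ne_of_mem hq hr
  have hcr := hilbertCrossRatio_eq_of_hilbert_eq hH0 hHdef hs ht hp hxA hxB hxC hxD hsA hpB htC
    hpD hbis
  have hsp := hilbertCrossRatio_mul_eq A B hA hB (hne hs hxA) (hne hp hxB) hsA hpB
  have htp := hilbertCrossRatio_mul_eq C D hC hD (hne ht hxC) (hne hp hxD) htC hpD
  have hDA : D t * A s ≠ 0 :=
    mul_ne_zero (right_ne_zero_of_mul hsideD.2.ne') (left_ne_zero_of_mul hsideA.1.ne')
  have hk' : k * (D t * A s) = B s * C t := by rw [hk]; exact div_mul_cancel₀ _ hDA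
  have hquad : B p * C p - k * (A p * D p) = 0 := by
    refine mul_right_cancel₀ hDA ?_
    linear_combination C t * D p * hsp - B p * A s * C t * D p * hcr - B p * A s * htp
      - A p * D p * hk'
  simp only [A, B, C, D, levAffine_apply, lev] at hquad
  linear_combination hquad

/-- Within a fixed sector `S(s,t,E_A,E_B,E_C,E_D)` determined by four edges of a
convex polygon `Ω`, any point `p` of the Hilbert bisector of the sites `s` and `t`
satisfies the quadratic equation `A x² + B xy + C y² + D x + E y + F = 0` with the
stated coefficients. -/
theorem bisector_quadratic_in_sector
    (Ω : Set (ℝ × ℝ))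
    (hconv : Convex ℝ Ω) (hcomp : IsCompact Ω) (hne : (interior Ω).Nonempty)
    (H : ℝ × ℝ → ℝ × ℝ → ℝ)
    (hH0 : ∀ p, H p p = 0)
    (hHdef : ∀ s t x y : ℝ × ℝ,
      s ∈ interior Ω → t ∈ interior Ω → s ≠ t →
      x ∈ frontier Ω → y ∈ frontier Ω →
      s ∈ segment ℝ x t → t ∈ segment ℝ s y →
      H s t = (1 / 2) * Real.log ((‖s - y‖ * ‖t - x‖) / (‖t - y‖ * ‖s - x‖)))
    (a1 a2 a3 b1 b2 b3 c1 c2 c3 d1 d2 d3 : ℝ)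
    (s t p : ℝ × ℝ)
    (hs : s ∈ interior Ω) (ht : t ∈ interior Ω) (hp : p ∈ interior Ω)
    -- the chord through `s` and `p` meets `∂Ω` on edge `E_A` (behind `s`) and
    -- edge `E_B` (beyond `p`), in the order `⟨x_A, s, p, x_B⟩`
    (hchord_sp : ∃ xA xB : ℝ × ℝ, xA ∈ frontier Ω ∧ lev a1 a2 a3 xA = 0 ∧
      xB ∈ frontier Ω ∧ lev b1 b2 b3 xB = 0 ∧
      s ∈ segment ℝ xA p ∧ p ∈ segment ℝ s xB)
    -- the chord through `t` and `p` meets `∂Ω` on edge `E_C` (behind `t`) and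
    -- edge `E_D` (beyond `p`), in the order `⟨x_C, t, p, x_D⟩`
    (hchord_tp : ∃ xC xD : ℝ × ℝ, xC ∈ frontier Ω ∧ lev c1 c2 c3 xC = 0 ∧
      xD ∈ frontier Ω ∧ lev d1 d2 d3 xD = 0 ∧
      t ∈ segment ℝ xC p ∧ p ∈ segment ℝ t xD)
    -- all points involved lie strictly on the same side of each edge line
    (hsideA : 0 < lev a1 a2 a3 s * lev a1 a2 a3 p ∧ 0 < lev a1 a2 a3 s * lev a1 a2 a3 t)
    (hsideB : 0 < lev b1 b2 b3 s * lev b1 b2 b3 p ∧ 0 < lev b1 b2 b3 s * lev b1 b2 b3 t)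
    (hsideC : 0 < lev c1 c2 c3 s * lev c1 c2 c3 p ∧ 0 < lev c1 c2 c3 s * lev c1 c2 c3 t)
    (hsideD : 0 < lev d1 d2 d3 s * lev d1 d2 d3 p ∧ 0 < lev d1 d2 d3 s * lev d1 d2 d3 t)
    -- `p` is on the Hilbert bisector of `s` and `t`
    (hbis : H s p = H t p) :
    ∀ k : ℝ, k = (lev b1 b2 b3 s * lev c1 c2 c3 t) / (lev d1 d2 d3 t * lev a1 a2 a3 s) →
      (b1 * c1 - a1 * d1 * k) * p.1 ^ 2
        + (b2 * c1 + b1 * c2 - a1 * d2 * k - a2 * d1 * k) * p.1 * p.2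
        + (b2 * c2 - a2 * d2 * k) * p.2 ^ 2
        + (b3 * c1 + c3 * b1 - a3 * d1 * k - a1 * d3 * k) * p.1
        + (b3 * c2 + b2 * c3 - a2 * d3 * k - a3 * d2 * k) * p.2
        + (b3 * c3 - a3 * d3 * k) = 0 :=
  bisector_quadratic_in_sector_general Ω H hH0 hHdef a1 a2 a3 b1 b2 b3 c1 c2 c3 d1 d2 d3 s t p hs ht
    hp hchord_sp hchord_tp hsideA hsideD hbis
end

section
/- In the four-distinct-edge case normalized to the unit square (edges on lines x=0, x=1, y=0, y=1), the discriminant of the bisector conic equals (1−k)², which is nonnegative; hence the bisector is never an ellipse (it is a hyperbola, or a parabola/degenerate conic when k=1). -/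
theorem four_edge_discriminant_general
    (k : ℝ)
    (a1 a2 a3 b1 b2 b3 c1 c2 c3 d1 d2 d3 : ℝ)
    (ha : a1 = 1 ∧ a2 = 0 ∧ a3 = 0)      -- edge `E_A` on the line `x = 0`
    (hb : b1 = 1 ∧ b2 = 0 ∧ b3 = -1)     -- edge `E_B` on the line `x = 1`
    (hc : c1 = 0 ∧ c2 = 1 ∧ c3 = 0)      -- edge `E_C` on the line `y = 0`
    (hd : d1 = 0 ∧ d2 = 1 ∧ d3 = -1) :   -- edge `E_D` on the line `y = 1`
    ((b2 * c1 + b1 * c2 - k * (a1 * d2 + a2 * d1)) ^ 2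
        - 4 * (b1 * c1 - a1 * d1 * k) * (b2 * c2 - a2 * d2 * k) = (1 - k) ^ 2)
      ∧ 0 ≤ (b2 * c1 + b1 * c2 - k * (a1 * d2 + a2 * d1)) ^ 2
          - 4 * (b1 * c1 - a1 * d1 * k) * (b2 * c2 - a2 * d2 * k)
      ∧ ¬((b2 * c1 + b1 * c2 - k * (a1 * d2 + a2 * d1)) ^ 2
          - 4 * (b1 * c1 - a1 * d1 * k) * (b2 * c2 - a2 * d2 * k) < 0) := by
  obtain ⟨rfl, rfl, -⟩ := ha
  obtain ⟨rfl, rfl, -⟩ := hb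
  obtain ⟨rfl, rfl, -⟩ := hc
  obtain ⟨rfl, rfl, -⟩ := hd
  have discriminant_eq : (0 * 0 + 1 * 1 - k * (1 * 1 + 0 * 0)) ^ 2
      - 4 * (1 * 0 - 1 * 0 * k) * (0 * 1 - 0 * 1 * k) = (1 - k) ^ 2 := by ring
  rw [discriminant_eq]
  exact ⟨rfl, sq_nonneg _, (sq_nonneg _).not_gt⟩

/-- In the four-distinct-edge case normalized to the unit square (edge lines
`x = 0`, `x = 1`, `y = 0`, `y = 1`), the discriminant `B² − 4AC` of the bisector
conic equals `(1 − k)² ≥ 0`; hence the bisector is never an ellipse. -/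
theorem four_edge_discriminant
    (k : ℝ) (hk : 0 < k)
    (a1 a2 a3 b1 b2 b3 c1 c2 c3 d1 d2 d3 : ℝ)
    (ha : a1 = 1 ∧ a2 = 0 ∧ a3 = 0)      -- edge `E_A` on the line `x = 0`
    (hb : b1 = 1 ∧ b2 = 0 ∧ b3 = -1)     -- edge `E_B` on the line `x = 1`
    (hc : c1 = 0 ∧ c2 = 1 ∧ c3 = 0)      -- edge `E_C` on the line `y = 0`
    (hd : d1 = 0 ∧ d2 = 1 ∧ d3 = -1) :   -- edge `E_D` on the line `y = 1`
    ((b2 * c1 + b1 * c2 - k * (a1 * d2 + a2 * d1)) ^ 2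
        - 4 * (b1 * c1 - a1 * d1 * k) * (b2 * c2 - a2 * d2 * k) = (1 - k) ^ 2)
      ∧ 0 ≤ (b2 * c1 + b1 * c2 - k * (a1 * d2 + a2 * d1)) ^ 2
          - 4 * (b1 * c1 - a1 * d1 * k) * (b2 * c2 - a2 * d2 * k)
      ∧ ¬((b2 * c1 + b1 * c2 - k * (a1 * d2 + a2 * d1)) ^ 2
          - 4 * (b1 * c1 - a1 * d1 * k) * (b2 * c2 - a2 * d2 * k) < 0) :=
  four_edge_discriminant_general k a1 a2 a3 b1 b2 b3 c1 c2 c3 d1 d2 d3 ha hb hc hd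
end

section
/- In the three-edge unit-simplex case, the constant k = ((s_x+s_y−1)(t_x+t_y−1))/(t_x s_y) is always strictly positive for sites s,t interior to the unit simplex, and the bisector conic's type is determined by the sign of (s_x+s_y−1)(t_x+t_y−1) − 4 s_y t_x: negative gives an ellipse, zero a parabola, positive a hyperbola. In particular, for fixed s, the set of t for which the conic is a parabola is contained in a line, with ellipse and hyperbola on the respective sides. -/
/-- In the three-edge unit-simplex case, the constant
`k = ((s_x+s_y−1)(t_x+t_y−1))/(t_x s_y)` is strictly positive for interior sites,
and the sign of the discriminant `k(k−4)` of the bisector conic agrees with the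
sign of `(s_x+s_y−1)(t_x+t_y−1) − 4 s_y t_x` (negative: ellipse, zero: parabola,
positive: hyperbola); in particular for fixed `s` the parabola locus of `t` lies
on a line, with ellipse and hyperbola on the respective sides. -/
theorem three_edge_conic_type
    (s t : ℝ × ℝ)
    (hs : 0 < s.1 ∧ 0 < s.2 ∧ s.1 + s.2 < 1)
    (ht : 0 < t.1 ∧ 0 < t.2 ∧ t.1 + t.2 < 1) :
    ∀ k e : ℝ,
      k = ((s.1 + s.2 - 1) * (t.1 + t.2 - 1)) / (t.1 * s.2) →
      e = (s.1 + s.2 - 1) * (t.1 + t.2 - 1) - 4 * s.2 * t.1 →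
      0 < k ∧
      (k * (k - 4) < 0 ↔ e < 0) ∧
      (k * (k - 4) = 0 ↔ e = 0) ∧
      (0 < k * (k - 4) ↔ 0 < e) := by
  obtain ⟨hs1, hs2, hs3⟩ := hs
  obtain ⟨ht1, ht2, ht3⟩ := ht
  intro k e hk he
  have hP : 0 < (s.1 + s.2 - 1) * (t.1 + t.2 - 1) :=
    mul_pos_of_neg_of_neg (by linarith) (by linarith)
  have hd : 0 < t.1 * s.2 := mul_pos ht1 hs2
  have hk0 : 0 < k := by rw [hk]; positivity
  refine ⟨hk0, ?_, ?_, ?_⟩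
  all_goals
    have hkey : k * (k - 4) = ((s.1 + s.2 - 1) * (t.1 + t.2 - 1)) / (t.1 * s.2) ^ 2 * e := by
      subst hk he; field_simp
    have hc : 0 < ((s.1 + s.2 - 1) * (t.1 + t.2 - 1)) / (t.1 * s.2) ^ 2 := by positivity
    rw [hkey]
  · constructor <;> intro h <;> nlinarith
  · simp [mul_eq_zero, ne_of_gt hc]
  · constructor <;> intro h <;> nlinarith
end
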